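/- arXiv:1106.5279 — 2 statements merged into one kernel-verified Lean document; each statement's English description precedes it below -/
import Mathlib

section
/- If G is an orientable, checkerboard colourable embedded graph and s is a Penrose state of its medial graph G_m, then cr(s) + c(s) ≡ f(G) (mod 2), where cr(s) is the number of crossing vertex states in s, c(s) the number of closed curves of s, and f(G) the number of faces of G. -/
open Polynomial

namespace Penrose

/-- Addition in the Klein four-group `Bool × Bool` (componentwise xor). -/
def kAdd (p q : Bool × Bool) : Bool × Bool := (xor p.1 q.1, xor p.2 q.2)

lemma kAdd_eq_zero_iff : ∀ p q : Bool × Bool, kAdd p q = (false, false) ↔ p = q := by decide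
lemma kAdd_eq_right_iff : ∀ p q : Bool × Bool, kAdd p q = q ↔ p = (false, false) := by decide
lemma kAdd_kAdd : ∀ p q : Bool × Bool, kAdd (kAdd p q) q = p := by decide

/-- The flags (corner triples) of a ribbon graph with edge set `E`: each edge carries
four flags. -/
abbrev Flags (E : Type) := E × Bool × Bool

/-- A ribbon graph (cellularly embedded graph, possibly non-orientable) with edge set `E`,
in the flag (graph-encoded map) model.  The involution `σ0` (crossing edge `e`) acts on the
four flags of `e` by adding `a e` in the Klein four-group, the involution `σ2` (switching
sides of `e`) by adding `b e`, and the fixed-point-free involution `s1` (moving to the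
adjacent edge-end in the same vertex-face corner) is given as data.
Vertices are the orbits of `⟨s1, σ2⟩`, edges the orbits of `⟨σ0, σ2⟩`, and the faces
(boundary components) the orbits of `⟨σ0, s1⟩`. -/
structure RibbonGraph (E : Type) where
  s1 : Flags E → Flags E
  s1_invol : ∀ f, s1 (s1 f) = f
  s1_ne : ∀ f, s1 f ≠ f
  a : E → Bool × Bool
  b : E → Bool × Bool
  a_ne : ∀ e, a e ≠ (false, false)
  b_ne : ∀ e, b e ≠ (false, false)
  ab_ne : ∀ e, a e ≠ b e

namespace RibbonGraph

variable {E : Type}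

/-- The involution crossing an edge. -/
def σ0 (G : RibbonGraph E) (f : Flags E) : Flags E := (f.1, kAdd f.2 (G.a f.1))

/-- The involution changing the side (face) of an edge, staying at the same vertex. -/
def σ2 (G : RibbonGraph E) (f : Flags E) : Flags E := (f.1, kAdd f.2 (G.b f.1))

lemma σ2_σ2 (G : RibbonGraph E) (f : Flags E) : G.σ2 (G.σ2 f) = f := by
  cases f with
  | mk e p => simp [σ2, kAdd_kAdd]

/-- The partial Petrial `G^{τ(A)}`: give a half-twist to every edge in `A`
(replace `σ0` by `σ0 σ2` on the flags of the edges of `A`). -/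
def petrial [DecidableEq E] (G : RibbonGraph E) (A : Finset E) : RibbonGraph E where
  s1 := G.s1
  s1_invol := G.s1_invol
  s1_ne := G.s1_ne
  a := fun e => if e ∈ A then kAdd (G.a e) (G.b e) else G.a e
  b := G.b
  a_ne := by
    intro e
    by_cases h : e ∈ A
    · simpa [h, kAdd_eq_zero_iff] using G.ab_ne e
    · simpa [h] using G.a_ne e
  b_ne := G.b_ne
  ab_ne := by
    intro e
    by_cases h : e ∈ A
    · simpa [h, kAdd_eq_right_iff] using G.a_ne e
    · simpa [h] using G.ab_ne e

/-- The partial dual `G^{δ(A)}`: swap the roles of `σ0` and `σ2` on the flags of the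
edges of `A`. -/
def pdual [DecidableEq E] (G : RibbonGraph E) (A : Finset E) : RibbonGraph E where
  s1 := G.s1
  s1_invol := G.s1_invol
  s1_ne := G.s1_ne
  a := fun e => if e ∈ A then G.b e else G.a e
  b := fun e => if e ∈ A then G.a e else G.b e
  a_ne := by
    intro e
    by_cases h : e ∈ A
    · simpa [h] using G.b_ne e
    · simpa [h] using G.a_ne e
  b_ne := by
    intro e
    by_cases h : e ∈ A
    · simpa [h] using G.a_ne e
    · simpa [h] using G.b_ne e
  ab_ne := by
    intro e
    by_cases h : e ∈ A
    · simpa [h] using (G.ab_ne e).symm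
    · simpa [h] using G.ab_ne e

/-- One step of the boundary (face) walk. -/
def faceStep (G : RibbonGraph E) (x y : Flags E) : Prop := y = G.σ0 x ∨ y = G.s1 x

/-- The number of faces (boundary components) of `G`. -/
noncomputable def nFaces (G : RibbonGraph E) : ℕ := Nat.card (Quot G.faceStep)

/-- One step of the walk around a vertex. -/
def vertStep (G : RibbonGraph E) (x y : Flags E) : Prop := y = G.σ2 x ∨ y = G.s1 x

/-- The number of vertices of `G`. -/
noncomputable def nVerts (G : RibbonGraph E) : ℕ := Nat.card (Quot G.vertStep)

/-- The number of edges of `G`. -/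
noncomputable def nEdges (_G : RibbonGraph E) : ℕ := Nat.card E

/-- One step of a walk in (the total space of) `G`. -/
def compStep (G : RibbonGraph E) (x y : Flags E) : Prop :=
  y = G.σ0 x ∨ y = G.σ2 x ∨ y = G.s1 x

/-- The number of connected components of `G`. -/
noncomputable def nComps (G : RibbonGraph E) : ℕ := Nat.card (Quot G.compStep)

/-- Two flags lie at the same vertex. -/
def VertexConn (G : RibbonGraph E) : Flags E → Flags E → Prop := Relation.EqvGen G.vertStep

/-- `G` is connected. -/
def Connected (G : RibbonGraph E) : Prop := ∀ x y : Flags E, Relation.EqvGen G.compStep x y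

/-- `G` is cubic: every vertex has exactly three edge-ends, i.e. six flags. -/
def Cubic (G : RibbonGraph E) : Prop :=
  ∀ x : Flags E, Nat.card {y : Flags E // G.VertexConn x y} = 6

/-- `G` is orientable. -/
def Orientable (G : RibbonGraph E) : Prop :=
  ∃ o : Flags E → Bool, ∀ f, o (G.σ0 f) = !(o f) ∧ o (G.σ2 f) = !(o f) ∧ o (G.s1 f) = !(o f)

/-- `G` is a plane graph: orientable and of total genus `0` (Euler's formula). -/
def Plane (G : RibbonGraph E) : Prop :=
  G.Orientable ∧ G.nVerts + G.nFaces = G.nEdges + 2 * G.nComps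

/-- `G` is checkerboard colourable: its faces admit a proper 2-colouring. -/
def CheckerboardColourable (G : RibbonGraph E) : Prop :=
  ∃ c : Flags E → Bool, ∀ f, c (G.σ0 f) = c f ∧ c (G.s1 f) = c f ∧ c (G.σ2 f) = !(c f)

/-- The (topological) Penrose polynomial
`P(G;λ) = ∑_{A ⊆ E(G)} (−1)^{|A|} λ^{f(G^{τ(A)})}`. -/
noncomputable def penrose [Fintype E] [DecidableEq E] (G : RibbonGraph E) : Polynomial ℤ :=
  ∑ A ∈ (Finset.univ : Finset E).powerset,
    (-1 : Polynomial ℤ) ^ A.card * X ^ (G.petrial A).nFaces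

/-- The boundary-crossing involution of `G − e`: pass through the deleted edge `e`
via `σ2`, and cross any other edge via `σ0`. -/
def delσ0 [DecidableEq E] (G : RibbonGraph E) (e : E) (f : Flags E) : Flags E :=
  if f.1 = e then G.σ2 f else G.σ0 f

/-- One step of the boundary walk of `G − e`. -/
def faceStepDel [DecidableEq E] (G : RibbonGraph E) (e : E) (x y : Flags E) : Prop :=
  y = G.delσ0 e x ∨ y = G.s1 x

/-- The number of faces (boundary components) of `G − e`. -/
noncomputable def nFacesDel [DecidableEq E] (G : RibbonGraph E) (e : E) : ℕ :=
  Nat.card (Quot (G.faceStepDel e))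

/-- The Penrose polynomial `P(G − e; λ)` of the graph obtained from `G` by deleting the
edge `e`. -/
noncomputable def penroseDel [Fintype E] [DecidableEq E] (G : RibbonGraph E) (e : E) :
    Polynomial ℤ :=
  ∑ A ∈ ((Finset.univ : Finset E).erase e).powerset,
    (-1 : Polynomial ℤ) ^ A.card * X ^ ((G.petrial A).nFacesDel e)

/-- The Penrose polynomial `P(G/e; λ)` of the contraction `G/e := G^{δ(e)} − e`. -/
noncomputable def penroseContr [Fintype E] [DecidableEq E] (G : RibbonGraph E) (e : E) :
    Polynomial ℤ :=
  (G.pdual {e}).penroseDel e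

/-- One step of a walk in `G − e` (together with the leftover vertices of `e`). -/
def compStepDel (G : RibbonGraph E) (e : E) (x y : Flags E) : Prop :=
  (x.1 ≠ e ∧ y = G.σ0 x) ∨ y = G.σ2 x ∨ y = G.s1 x

/-- The number of connected components of `G − e`. -/
noncomputable def nCompsDel (G : RibbonGraph E) (e : E) : ℕ :=
  Nat.card (Quot (G.compStepDel e))

/-- The edge `e` is a bridge of `G`: deleting it increases the number of connected
components. -/
def IsBridge (G : RibbonGraph E) (e : E) : Prop := G.nComps < G.nCompsDel e

/-- The edge `e` is a non-twisted loop bounding a 2-cell (a trivial loop): one of its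
sides is a face traversing only `e`, once. -/
def IsTrivialLoop (G : RibbonGraph E) (e : E) : Prop :=
  ∃ p : Bool × Bool, G.s1 (e, p) = G.σ0 (e, p)

/-- Isomorphism (equivalence) of ribbon graphs over the same edge set. -/
def IsIso (G H : RibbonGraph E) : Prop :=
  ∃ ψ : Flags E ≃ Flags E, (∀ f, ψ (G.s1 f) = H.s1 (ψ f)) ∧
    (∀ f, ψ (G.σ0 f) = H.σ0 (ψ f)) ∧ (∀ f, ψ (G.σ2 f) = H.σ2 (ψ f))

/-- Given a Penrose state `σ` of the medial graph `G_m` (a choice, at the medial vertex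
`v_e` of each edge `e` of `G`, of the crossing transition if `σ e = true` and of the white
split otherwise), the transition used at `v_e` by the closed curves of the state. -/
def stateσ0 (G : RibbonGraph E) (σ : E → Bool) (f : Flags E) : Flags E :=
  if σ f.1 then G.σ0 (G.σ2 f) else G.σ0 f

/-- The number `c(s)` of closed curves of the Penrose state `σ` of the medial graph. -/
noncomputable def stateCurves (G : RibbonGraph E) (σ : E → Bool) : ℕ :=
  Nat.card (Quot (fun x y : Flags E => y = G.stateσ0 σ x ∨ y = G.s1 x))

/-- A `k`-valuation of the medial graph `G_m`: an edge colouring of `G_m` (edges of `G_m`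
correspond to `s1`-orbits of flags of `G`). -/
def IsValuation {n : ℕ} (G : RibbonGraph E) (c : Flags E → Fin n) : Prop :=
  ∀ f, c (G.s1 f) = c f

/-- The medial vertex `v_e` is total in the valuation `c`: all four incident medial edges
receive the same colour. -/
def TotalAt {n : ℕ} (G : RibbonGraph E) (c : Flags E → Fin n) (e : E) : Prop :=
  ∀ p q : Bool × Bool, c (e, p) = c (e, q)

/-- The medial vertex `v_e` has white-split type with two distinct colours. -/
def WhiteAt {n : ℕ} (G : RibbonGraph E) (c : Flags E → Fin n) (e : E) : Prop :=
  (∀ p : Bool × Bool, c (G.σ0 (e, p)) = c (e, p)) ∧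
    c (e, (false, false)) ≠ c (G.σ2 (e, (false, false)))

/-- The medial vertex `v_e` has crossing type with two distinct colours. -/
def CrossAt {n : ℕ} (G : RibbonGraph E) (c : Flags E → Fin n) (e : E) : Prop :=
  (∀ p : Bool × Bool, c (G.σ0 (G.σ2 (e, p))) = c (e, p)) ∧
    c (e, (false, false)) ≠ c (G.σ0 (e, (false, false)))

/-- An admissible valuation: at every medial vertex the two monochromatic pairs have
distinct colours and form a white split or a crossing. -/
def Admissible {n : ℕ} (G : RibbonGraph E) (c : Flags E → Fin n) : Prop :=
  G.IsValuation c ∧ ∀ e : E, G.WhiteAt c e ∨ G.CrossAt c e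

/-- A permissible valuation: every medial vertex is of white-split, crossing or total
type. -/
def Permissible {n : ℕ} (G : RibbonGraph E) (c : Flags E → Fin n) : Prop :=
  G.IsValuation c ∧ ∀ e : E, G.WhiteAt c e ∨ G.CrossAt c e ∨ G.TotalAt c e

/-- The number of crossing-type medial vertices of a valuation. -/
noncomputable def crCount {n : ℕ} (G : RibbonGraph E) (c : Flags E → Fin n) : ℕ :=
  Nat.card {e : E // G.CrossAt c e}

/-- The number of total medial vertices of a valuation. -/
noncomputable def totCount {n : ℕ} (G : RibbonGraph E) (c : Flags E → Fin n) : ℕ :=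
  Nat.card {e : E // G.TotalAt c e}

/-- A proper edge 3-colouring of `G`: edges meeting at a vertex get distinct colours. -/
def ProperEdge3Coloring (G : RibbonGraph E) (κ : E → Fin 3) : Prop :=
  ∀ e e' : E, e ≠ e' →
    (∃ p q : Bool × Bool, G.VertexConn (e, p) (e', q)) → κ e ≠ κ e'

/-- The circuit partition polynomial `j(G_m^P ; x)` of the Penrose directed medial graph
of an oriented checkerboard coloured graph `G`: its states are exactly the Penrose states
of `G_m`, so `j(G_m^P ; x) = ∑_s x^{c(s)} = ∑_{A ⊆ E(G)} x^{f(G^{τ(A)})}`. -/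
noncomputable def circuitPartitionMedial [Fintype E] [DecidableEq E] (G : RibbonGraph E) :
    Polynomial ℤ :=
  ∑ A ∈ (Finset.univ : Finset E).powerset, X ^ (G.petrial A).nFaces

/-- The faces of `G`, i.e. the vertices of the geometric dual `G*`. -/
def Face (G : RibbonGraph E) := Quot G.faceStep

instance [Finite E] (G : RibbonGraph E) : Finite (Face G) :=
  Finite.of_surjective (Quot.mk _) (fun q => Quot.exists_rep q)

/-- The underlying simple graph of the geometric dual `G*`: vertices are the faces of `G`,
two distinct faces being adjacent when they share an edge. -/
def dualGraph (G : RibbonGraph E) : SimpleGraph (Face G) where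
  Adj x y := x ≠ y ∧ ∃ g : Flags E, x = Quot.mk _ g ∧ y = Quot.mk _ (G.σ2 g)
  symm := by
    constructor
    rintro x y ⟨hxy, g, hx, hy⟩
    exact ⟨Ne.symm hxy, G.σ2 g, hy, by rw [σ2_σ2]; exact hx⟩
  loopless := by constructor; rintro x ⟨h, -⟩; exact h rfl

/-- The chromatic polynomial of a finite simple graph, via Whitney's rank expansion:
`χ(H;λ) = ∑_{S ⊆ E(H)} (−1)^{|S|} λ^{c(S)}`, where `c(S)` is the number of connected
components of the spanning subgraph with edge set `S`. -/
noncomputable def chromPoly {V : Type} [Finite V] (H : SimpleGraph V) : Polynomial ℤ := by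
  classical
  haveI := Fintype.ofFinite V
  exact ∑ S ∈ ((Finset.univ : Finset (Sym2 V)).filter (· ∈ H.edgeSet)).powerset,
    (-1 : Polynomial ℤ) ^ S.card * X ^ (Nat.card (Quot (fun x y : V => s(x, y) ∈ S)))

/-- The chromatic polynomial `χ(G*; λ)` of the geometric dual of `G` (as a multigraph:
it is `0` when `G*` has a loop, i.e. when some edge of `G` has the same face on both of
its sides, and otherwise it is the chromatic polynomial of the underlying simple graph
of `G*`). -/
noncomputable def dualChrom [Finite E] (G : RibbonGraph E) : Polynomial ℤ := by
  classical
  exact if ∃ g : Flags E, Quot.mk G.faceStep (G.σ2 g) = Quot.mk G.faceStep g then 0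
    else chromPoly G.dualGraph



-- ===================== auxiliary material for stmt10 =====================


noncomputable def Qc {α : Type} (π : Equiv.Perm α) : ℕ :=
  Nat.card (Quot (fun x y : α => y = π x))

lemma card_ne_add_one {β : Type} [Finite β] (b : β) :
    Nat.card {c : β // c ≠ b} + 1 = Nat.card β := by
  classical
  haveI := Fintype.ofFinite β
  rw [Nat.card_eq_fintype_card, Nat.card_eq_fintype_card]
  have h1 : Fintype.card {c : β // ¬ (c = b)} = Fintype.card β - Fintype.card {c : β // c = b} :=
    Fintype.card_subtype_compl _
  have h2 : Fintype.card {c : β // c = b} = 1 := Fintype.card_subtype_eq b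
  have h3 : 1 ≤ Fintype.card β := Fintype.card_pos_iff.mpr ⟨b⟩
  simp only [h1, h2]
  omega

lemma signQ {α : Type} [Fintype α] [DecidableEq α] (π : Equiv.Perm α) :
    Equiv.Perm.sign π * (-1 : ℤˣ) ^ (Qc π) = (-1) ^ (Fintype.card α) := by
  suffices H : ∀ m (π : Equiv.Perm α),
      (Finset.univ.filter (fun x => π x ≠ x)).card = m →
      Equiv.Perm.sign π * (-1 : ℤˣ) ^ (Qc π) = (-1) ^ (Fintype.card α) from H _ π rfl
  intro m
  induction m using Nat.strong_induction_on with
  | _ m IH =>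
  intro π hm
  by_cases hfix : ∀ x, π x = x
  · have hπ : π = 1 := Equiv.ext fun x => hfix x
    subst hπ
    have e : Quot (fun x y : α => y = (1 : Equiv.Perm α) x) ≃ α :=
      { toFun := Quot.lift id (fun a b h => by simpa using h.symm)
        invFun := Quot.mk _
        left_inv := fun q => by induction q using Quot.ind with | _ a => rfl
        right_inv := fun a => rfl }
    have hQ : Qc (1 : Equiv.Perm α) = Fintype.card α := by
      rw [Qc, Nat.card_congr e, Nat.card_eq_fintype_card]
    rw [hQ]; simp
  · push_neg at hfix
    obtain ⟨x, hx⟩ := hfix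
    set π' := Equiv.swap x (π x) * π with hπ'def
    have happ : ∀ a, π' a = Equiv.swap x (π x) (π a) := fun a => rfl
    have hfixes : π' x = x := by rw [happ, Equiv.swap_apply_right]
    have hkeep : ∀ y, π y = y → π' y = y := by
      intro y hy
      have h1 : y ≠ x := fun h => hx (h ▸ hy)
      have h2 : y ≠ π x := by
        intro h
        apply hx
        apply π.injective
        rw [← h, hy, h]
      rw [happ, hy, Equiv.swap_apply_of_ne_of_ne h1 h2]
    have hmoved : (Finset.univ.filter (fun z => π' z ≠ z)).card < m := by
      rw [← hm]
      apply Finset.card_lt_card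
      constructor
      · intro y hy
        simp only [Finset.mem_filter, Finset.mem_univ, true_and] at hy ⊢
        intro h; exact hy (hkeep y h)
      · intro hsub
        have := hsub (by simp [hx] : x ∈ Finset.univ.filter (fun z => π z ≠ z))
        simp [hfixes] at this
    have hQ : Qc π' = Qc π + 1 := by
      set r := fun a b : α => b = π a with hr
      set r' := fun a b : α => b = π' a with hr'
      have fixcls : ∀ y, Quot.mk r' y = Quot.mk r' x → y = x := by
        have resp : ∀ a b, r' a b → (a = x) = (b = x) := by
          intro a b hab
          rw [hr'] at hab
          apply propext; constructor
          · intro ha; rw [hab, ha, hfixes]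
          · intro hb; apply π'.injective; rw [← hab, hb, hfixes]
        intro y h
        have := congrArg (Quot.lift (fun y => y = x) resp) h
        simpa using this
      have hπx_ne : Quot.mk r' (π x) ≠ Quot.mk r' x := fun h => hx (fixcls _ h)
      have respg : ∀ a b, r' a b → Quot.mk r a = Quot.mk r b := by
        intro a b hab
        rw [hr'] at hab
        rw [happ] at hab
        by_cases h1 : π a = x
        · have hb : b = π x := by rw [hab, h1, Equiv.swap_apply_left]
          calc Quot.mk r a = Quot.mk r (π a) := Quot.sound (show r a (π a) from rfl)
            _ = Quot.mk r x := by rw [h1]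
            _ = Quot.mk r (π x) := Quot.sound (show r x (π x) from rfl)
            _ = Quot.mk r b := by rw [hb]
        · by_cases h2 : π a = π x
          · have hax : a = x := π.injective h2
            have hb : b = x := by rw [hab, h2, Equiv.swap_apply_right]
            rw [hax, hb]
          · have hb : b = π a := by rw [hab, Equiv.swap_apply_of_ne_of_ne h1 h2]
            rw [hb]; exact Quot.sound (show r a (π a) from rfl)
      have respH : ∀ a b, r a b →
          (fun y => if hy : y = x then
              (⟨Quot.mk r' (π x), hπx_ne⟩ : {c : Quot r' // c ≠ Quot.mk r' x})
            else ⟨Quot.mk r' y, fun h => hy (fixcls _ h)⟩) a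
          = (fun y => if hy : y = x then
              (⟨Quot.mk r' (π x), hπx_ne⟩ : {c : Quot r' // c ≠ Quot.mk r' x})
            else ⟨Quot.mk r' y, fun h => hy (fixcls _ h)⟩) b := by
        intro a b hab
        rw [hr] at hab
        apply Subtype.ext
        simp only
        by_cases ha : a = x
        · have hbx : b ≠ x := by rw [hab, ha]; exact hx
          rw [dif_pos ha, dif_neg hbx]
          show Quot.mk r' (π x) = Quot.mk r' b
          rw [hab, ha]
        · by_cases hb : b = x
          · rw [dif_neg ha, dif_pos hb]
            show Quot.mk r' a = Quot.mk r' (π x)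
            have h1 : π' a = π x := by
              have h2 : π a = x := by rw [← hab]; exact hb
              rw [happ, h2, Equiv.swap_apply_left]
            rw [← h1]
            exact Quot.sound (show r' a (π' a) from rfl)
          · rw [dif_neg ha, dif_neg hb]
            show Quot.mk r' a = Quot.mk r' b
            have h1 : π' a = b := by
              rw [happ]
              have h2 : π a ≠ x := by rw [← hab]; exact hb
              have h3 : π a ≠ π x := fun h => ha (π.injective h)
              rw [Equiv.swap_apply_of_ne_of_ne h2 h3]
              exact hab.symm
            rw [← h1]
            exact Quot.sound (show r' a (π' a) from rfl)
      have eqv : Quot r ≃ {c : Quot r' // c ≠ Quot.mk r' x} :=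
        { toFun := Quot.lift (fun y => if hy : y = x then
              (⟨Quot.mk r' (π x), hπx_ne⟩ : {c : Quot r' // c ≠ Quot.mk r' x})
            else ⟨Quot.mk r' y, fun h => hy (fixcls _ h)⟩) respH
          invFun := fun c => Quot.lift (Quot.mk r) respg c.1
          left_inv := by
            intro q
            induction q using Quot.ind with
            | _ y =>
              by_cases hy : y = x
              · simp only [Quot.lift_mk, dif_pos hy]
                show Quot.mk r (π x) = Quot.mk r y
                rw [hy]
                exact (Quot.sound (show r x (π x) from rfl)).symm
              · simp only [Quot.lift_mk, dif_neg hy]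
          right_inv := by
            rintro ⟨cq, hcq⟩
            revert hcq
            induction cq using Quot.ind with
            | _ z =>
              intro hcq
              have hz : z ≠ x := fun h => hcq (by rw [h])
              simp only [Quot.lift_mk, dif_neg hz] }
      haveI : Finite (Quot r') := Finite.of_surjective (Quot.mk r') (fun q => Quot.exists_rep q)
      have h0 : Qc π = Nat.card {c : Quot r' // c ≠ Quot.mk r' x} := by
        rw [Qc, Nat.card_congr eqv]
      rw [Qc, h0, card_ne_add_one]
    have hsign : Equiv.Perm.sign π' = - Equiv.Perm.sign π := by
      rw [hπ'def, map_mul, Equiv.Perm.sign_swap (Ne.symm hx), neg_one_mul]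
    have key := IH _ hmoved π' rfl
    rw [hsign, hQ, pow_succ, mul_neg_one, neg_mul_neg] at key
    exact key

lemma neg_one_pow_units_eq_iff (m k : ℕ) : ((-1 : ℤˣ) ^ m = (-1) ^ k) ↔ m % 2 = k % 2 := by
  have h : ∀ n : ℕ, ((-1 : ℤˣ) ^ n) = if n % 2 = 0 then 1 else -1 := by
    intro n
    rcases Nat.even_or_odd n with hn | hn
    · rw [hn.neg_one_pow, if_pos (Nat.even_iff.mp hn)]
    · rw [hn.neg_one_pow, if_neg (by rw [Nat.odd_iff.mp hn]; exact one_ne_zero)]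
  rw [h m, h k]
  by_cases hm : m % 2 = 0 <;> by_cases hk : k % 2 = 0 <;>
    simp [hm, hk] <;> omega

lemma Qc_mul_swap_parity {α : Type} [Fintype α] [DecidableEq α] (π : Equiv.Perm α)
    (p q : α) (hpq : p ≠ q) :
    (Qc (π * Equiv.swap p q) + 1) % 2 = Qc π % 2 := by
  have h1 := signQ (π * Equiv.swap p q)
  have h2 := signQ π
  rw [map_mul, Equiv.Perm.sign_swap hpq, mul_neg_one, neg_mul] at h1
  rw [← h2] at h1
  have h3 : Equiv.Perm.sign π * (-1 : ℤˣ) ^ (Qc (π * Equiv.swap p q) + 1)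
      = Equiv.Perm.sign π * (-1) ^ Qc π := by
    rw [pow_succ, mul_neg_one, mul_neg]
    rw [h1]
  have h4 := mul_left_cancel h3
  exact (neg_one_pow_units_eq_iff _ _).mp h4


section Stmt10Aux

variable {E : Type}

lemma pk_zero : ∀ p : Bool × Bool, kAdd p (false, false) = p := by decide
lemma pk_zero_add : ∀ p : Bool × Bool, kAdd (false, false) p = p := by decide
lemma pk_assoc : ∀ p q r : Bool × Bool, kAdd (kAdd p q) r = kAdd p (kAdd q r) := by decide
lemma pk_swap : ∀ p q r : Bool × Bool, kAdd (kAdd p q) r = kAdd (kAdd p r) q := by decide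
lemma pk_cancel : ∀ v w : Bool × Bool, kAdd v (kAdd w v) = w := by decide
lemma pk_ne_of_ne : ∀ p q : Bool × Bool, q ≠ (false, false) → kAdd p q ≠ p := by decide
lemma pk_mem_four : ∀ a b w : Bool × Bool, a ≠ (false, false) → b ≠ (false, false) → a ≠ b →
    w = (false, false) ∨ w = a ∨ w = b ∨ w = kAdd a b := by decide
lemma pb_xor_not_left : ∀ a b : Bool, xor (!a) b = !(xor a b) := by decide
lemma pb_xor_not_not : ∀ a b : Bool, xor (!a) (!b) = xor a b := by decide

lemma σ0_σ0 (G : RibbonGraph E) (f : Flags E) : G.σ0 (G.σ0 f) = f := by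
  cases f with
  | mk e p => simp [σ0, kAdd_kAdd]

lemma σ2_σ0_comm (G : RibbonGraph E) (f : Flags E) : G.σ2 (G.σ0 f) = G.σ0 (G.σ2 f) := by
  cases f with
  | mk e p =>
    show (e, kAdd (kAdd p (G.a e)) (G.b e)) = (e, kAdd (kAdd p (G.b e)) (G.a e))
    rw [pk_swap]

lemma petrial_σ0 [DecidableEq E] (G : RibbonGraph E) (A : Finset E) (f : Flags E) :
    (G.petrial A).σ0 f = if f.1 ∈ A then G.σ2 (G.σ0 f) else G.σ0 f := by
  by_cases h : f.1 ∈ A <;> simp [petrial, σ0, σ2, h, pk_assoc]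

/-- The permutation of the "positive" flags whose orbits are the faces. -/
def permD (G' : RibbonGraph E) (d : Flags E → Bool)
    (h0 : ∀ f, d (G'.σ0 f) = !d f) (h1 : ∀ f, d (G'.s1 f) = !d f) :
    Equiv.Perm {f : Flags E // d f = true} where
  toFun x := ⟨G'.σ0 (G'.s1 x.1), by simp [h0, h1, x.2]⟩
  invFun x := ⟨G'.s1 (G'.σ0 x.1), by simp [h0, h1, x.2]⟩
  left_inv x := Subtype.ext (by simp only [σ0_σ0, G'.s1_invol])
  right_inv x := Subtype.ext (by simp only [σ0_σ0, G'.s1_invol])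

lemma nFaces_eq_Qc (G' : RibbonGraph E) (d : Flags E → Bool)
    (h0 : ∀ f, d (G'.σ0 f) = !d f) (h1 : ∀ f, d (G'.s1 f) = !d f) :
    G'.nFaces = Qc (permD G' d h0 h1) := by
  set π := permD G' d h0 h1 with hπ
  set rD := fun x y : {f : Flags E // d f = true} => y = π x with hrD
  have dflag : ∀ f : Flags E, ¬ d f = true → d (G'.σ0 f) = true := by
    intro f hf
    rw [h0]
    cases hdf : d f
    · rfl
    · exact absurd hdf hf
  have mkeq : ∀ (x y : Flags E) (hx : d x = true) (hy : d y = true), x = y →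
      Quot.mk rD ⟨x, hx⟩ = Quot.mk rD ⟨y, hy⟩ := by
    intro x y hx hy h; subst h; rfl
  have respH : ∀ a b : Flags E, G'.faceStep a b →
      (fun f => if hf : d f = true then Quot.mk rD ⟨f, hf⟩
        else Quot.mk rD ⟨G'.σ0 f, dflag f hf⟩) a
      = (fun f => if hf : d f = true then Quot.mk rD ⟨f, hf⟩
        else Quot.mk rD ⟨G'.σ0 f, dflag f hf⟩) b := by
    intro a b hab
    simp only
    rcases hab with hab | hab
    · subst hab
      by_cases ha : d a = true
      · have hb : ¬ d (G'.σ0 a) = true := by rw [h0, ha]; simp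
        rw [dif_pos ha, dif_neg hb]
        exact (mkeq _ _ _ _ (σ0_σ0 G' a)).symm
      · have hb : d (G'.σ0 a) = true := dflag a ha
        rw [dif_neg ha, dif_pos hb]
    · subst hab
      by_cases ha : d a = true
      · have hb : ¬ d (G'.s1 a) = true := by rw [h1, ha]; simp
        rw [dif_pos ha, dif_neg hb]
        exact Quot.sound (Subtype.ext rfl)
      · have hb : d (G'.s1 a) = true := by
          rw [h1]
          cases hdf : d a
          · rfl
          · exact absurd hdf ha
        rw [dif_neg ha, dif_pos hb]
        refine (Quot.sound (?_ : rD ⟨G'.s1 a, hb⟩ ⟨G'.σ0 a, dflag a ha⟩)).symm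
        apply Subtype.ext
        show G'.σ0 a = G'.σ0 (G'.s1 (G'.s1 a))
        rw [G'.s1_invol]
  have respK : ∀ x y : {f : Flags E // d f = true}, rD x y →
      Quot.mk G'.faceStep x.1 = Quot.mk G'.faceStep y.1 := by
    intro x y hxy
    rw [hrD] at hxy
    have hy : y.1 = G'.σ0 (G'.s1 x.1) := by rw [hxy]; rfl
    calc Quot.mk G'.faceStep x.1
        = Quot.mk G'.faceStep (G'.s1 x.1) := Quot.sound (Or.inr rfl)
      _ = Quot.mk G'.faceStep (G'.σ0 (G'.s1 x.1)) := Quot.sound (Or.inl rfl)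
      _ = Quot.mk G'.faceStep y.1 := by rw [hy]
  have eqv : Quot G'.faceStep ≃ Quot rD :=
    { toFun := Quot.lift (fun f => if hf : d f = true then Quot.mk rD ⟨f, hf⟩
        else Quot.mk rD ⟨G'.σ0 f, dflag f hf⟩) respH
      invFun := Quot.lift (fun x => Quot.mk G'.faceStep x.1) respK
      left_inv := by
        intro q
        induction q using Quot.ind with
        | _ f =>
          by_cases hf : d f = true
          · simp only [Quot.lift_mk, dif_pos hf]
          · simp only [Quot.lift_mk, dif_neg hf]
            exact (@Quot.sound _ G'.faceStep f (G'.σ0 f) (Or.inl rfl)).symm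
      right_inv := by
        intro q
        induction q using Quot.ind with
        | _ x =>
          simp only [Quot.lift_mk, dif_pos x.2] }
  rw [nFaces, Nat.card_congr eqv, Qc]

end Stmt10Aux


section Stmt10Step

variable {E : Type}

lemma petrial_empty_nFaces [DecidableEq E] (G : RibbonGraph E) :
    (G.petrial ∅).nFaces = G.nFaces := by
  have hσ : (G.petrial ∅).faceStep = G.faceStep := by
    funext x y
    simp [faceStep, petrial_σ0, petrial]
  rw [nFaces, nFaces, hσ]

lemma parity_step [Fintype E] [DecidableEq E] (G : RibbonGraph E) (o c : Flags E → Bool)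
    (ho : ∀ f, o (G.σ0 f) = !(o f) ∧ o (G.σ2 f) = !(o f) ∧ o (G.s1 f) = !(o f))
    (hc : ∀ f, c (G.σ0 f) = c f ∧ c (G.s1 f) = c f ∧ c (G.σ2 f) = !(c f))
    (A : Finset E) (e : E) (he : e ∉ A) :
    ((G.petrial (insert e A)).nFaces + 1) % 2 = (G.petrial A).nFaces % 2 := by
  set d : Flags E → Bool := fun f => xor (o f) (c f) with hd
  have hdσ0 : ∀ f, d (G.σ0 f) = !d f := by
    intro f
    show xor (o (G.σ0 f)) (c (G.σ0 f)) = !(xor (o f) (c f))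
    rw [(ho f).1, (hc f).1, pb_xor_not_left]
  have hdσ2 : ∀ f, d (G.σ2 f) = d f := by
    intro f
    show xor (o (G.σ2 f)) (c (G.σ2 f)) = xor (o f) (c f)
    rw [(ho f).2.1, (hc f).2.2]
    cases o f <;> cases c f <;> rfl
  have hds1 : ∀ f, d (G.s1 f) = !d f := by
    intro f
    show xor (o (G.s1 f)) (c (G.s1 f)) = !(xor (o f) (c f))
    rw [(ho f).2.2, (hc f).2.1, pb_xor_not_left]
  have h0A : ∀ f, d ((G.petrial A).σ0 f) = !d f := by
    intro f
    rw [petrial_σ0]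
    by_cases hf : f.1 ∈ A
    · rw [if_pos hf, hdσ2, hdσ0]
    · rw [if_neg hf, hdσ0]
  have h0I : ∀ f, d ((G.petrial (insert e A)).σ0 f) = !d f := by
    intro f
    rw [petrial_σ0]
    by_cases hf : f.1 ∈ insert e A
    · rw [if_pos hf, hdσ2, hdσ0]
    · rw [if_neg hf, hdσ0]
  have h1A : ∀ f, d ((G.petrial A).s1 f) = !d f := hds1
  have h1I : ∀ f, d ((G.petrial (insert e A)).s1 f) = !d f := hds1
  -- the two distinguished flags at the medial vertex of e
  set v0 : Bool × Bool := if d (e, (false, false)) = true then G.a e else (false, false)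
    with hv0def
  have hv0 : d (e, v0) = false := by
    by_cases h : d (e, (false, false)) = true
    · rw [hv0def, if_pos h]
      have : ((e, G.a e) : Flags E) = G.σ0 (e, (false, false)) := by
        show ((e, G.a e) : Flags E) = (e, kAdd (false, false) (G.a e))
        rw [pk_zero_add]
      rw [this, hdσ0, h]
      rfl
    · rw [hv0def, if_neg h]
      cases hdf : d (e, (false, false))
      · rfl
      · exact absurd hdf h
  set v1 : Bool × Bool := kAdd v0 (G.b e) with hv1def
  have hσ2v0 : G.σ2 (e, v0) = (e, v1) := rfl
  have hv1 : d (e, v1) = false := by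
    rw [← hσ2v0, hdσ2, hv0]
  have hne01 : v0 ≠ v1 := (pk_ne_of_ne v0 (G.b e) (G.b_ne e)).symm
  have hdP : d (G.s1 (e, v0)) = true := by rw [hds1, hv0]; rfl
  have hdQ : d (G.s1 (e, v1)) = true := by rw [hds1, hv1]; rfl
  set P : {f : Flags E // d f = true} := ⟨G.s1 (e, v0), hdP⟩ with hPdef
  set Q : {f : Flags E // d f = true} := ⟨G.s1 (e, v1), hdQ⟩ with hQdef
  have hPQ : P ≠ Q := by
    intro h
    apply hne01
    have h1 : G.s1 (e, v0) = G.s1 (e, v1) := congrArg Subtype.val h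
    have h2 : ((e, v0) : Flags E) = (e, v1) := by
      rw [← G.s1_invol (e, v0), h1, G.s1_invol]
    exact congrArg Prod.snd h2
  -- σ2 localized at e
  set σ2e : Flags E → Flags E := fun f => if f.1 = e then G.σ2 f else f with hσ2e
  have hins : ∀ f, (G.petrial (insert e A)).σ0 f = (G.petrial A).σ0 (σ2e f) := by
    intro f
    rw [petrial_σ0, petrial_σ0]
    by_cases hf : f.1 = e
    · have hmem : f.1 ∈ insert e A := by rw [Finset.mem_insert]; exact Or.inl hf
      have hσ2ef : σ2e f = G.σ2 f := by
        rw [hσ2e]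
        show (if f.1 = e then G.σ2 f else f) = G.σ2 f
        exact if_pos hf
      have hnmem : ¬ (G.σ2 f).1 ∈ A := by
        show ¬ f.1 ∈ A
        rw [hf]
        exact he
      rw [if_pos hmem, hσ2ef, if_neg hnmem, σ2_σ0_comm]
    · have hmem : f.1 ∈ insert e A ↔ f.1 ∈ A := by
        rw [Finset.mem_insert]
        exact or_iff_right hf
      rw [hσ2e]
      simp only [if_neg hf]
      by_cases hfA : f.1 ∈ A
      · rw [if_pos (hmem.mpr hfA), if_pos hfA]
      · rw [if_neg (fun h => hfA (hmem.mp h)), if_neg hfA]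
  have hs1pet : ∀ (B : Finset E) (f : Flags E), (G.petrial B).s1 f = G.s1 f := fun _ _ => rfl
  -- the key permutation identity
  have hperm : permD (G.petrial (insert e A)) d h0I h1I
      = permD (G.petrial A) d h0A h1A * Equiv.swap P Q := by
    apply Equiv.ext
    intro x
    apply Subtype.ext
    show (G.petrial (insert e A)).σ0 (G.s1 x.1)
        = (G.petrial A).σ0 (G.s1 ((Equiv.swap P Q x)).1)
    rw [hins]
    congr 1
    -- σ2e (G.s1 x.1) = G.s1 ((swap P Q x).1)
    by_cases hg : (G.s1 x.1).1 = e
    · -- the flag next to x across s1 is a flag of e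
      set g : Flags E := G.s1 x.1 with hgdef
      have hgeta : g = (e, g.2) := by
        rw [← hg]
      have hdg : d g = false := by
        rw [hgdef, hds1, x.2]
        rfl
      have hw : g.2 = kAdd v0 (kAdd g.2 v0) := (pk_cancel v0 g.2).symm
      rcases pk_mem_four (G.a e) (G.b e) (kAdd g.2 v0) (G.a_ne e) (G.b_ne e) (G.ab_ne e)
        with hu | hu | hu | hu
      · -- g.2 = v0 : x = P
        have hgv : g.2 = v0 := by rw [hw, hu, pk_zero]
        have hxP : x = P := by
          apply Subtype.ext
          rw [hPdef]
          show x.1 = G.s1 (e, v0)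
          rw [← hgv, ← hgeta, hgdef, G.s1_invol]
        rw [hxP, Equiv.swap_apply_left]
        show σ2e g = G.s1 Q.1
        rw [hQdef]
        show σ2e g = G.s1 (G.s1 (e, v1))
        rw [G.s1_invol, hσ2e]
        simp only [if_pos hg]
        rw [hgeta, hgv]
        exact hσ2v0
      · -- g.2 = kAdd v0 (a e) : contradiction with d g = false
        exfalso
        have : ((e, g.2) : Flags E) = G.σ0 (e, v0) := by
          show ((e, g.2) : Flags E) = (e, kAdd v0 (G.a e))
          rw [hw, hu]
        have hdg2 : d (e, g.2) = true := by
          rw [this, hdσ0, hv0]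
          rfl
        rw [← hgeta, hdg] at hdg2
        exact Bool.false_ne_true hdg2
      · -- g.2 = v1 : x = Q
        have hgv : g.2 = v1 := by rw [hw, hu, hv1def]
        have hxQ : x = Q := by
          apply Subtype.ext
          rw [hQdef]
          show x.1 = G.s1 (e, v1)
          rw [← hgv, ← hgeta, hgdef, G.s1_invol]
        rw [hxQ, Equiv.swap_apply_right]
        show σ2e g = G.s1 P.1
        rw [hPdef]
        show σ2e g = G.s1 (G.s1 (e, v0))
        rw [G.s1_invol, hσ2e]
        simp only [if_pos hg]
        rw [hgeta, hgv]
        show G.σ2 (e, v1) = (e, v0)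
        show ((e, kAdd v1 (G.b e)) : Flags E) = (e, v0)
        rw [hv1def, kAdd_kAdd]
      · -- g.2 = kAdd v0 (kAdd (a e) (b e)) : contradiction
        exfalso
        have : ((e, g.2) : Flags E) = G.σ2 (G.σ0 (e, v0)) := by
          show ((e, g.2) : Flags E) = (e, kAdd (kAdd v0 (G.a e)) (G.b e))
          rw [hw, hu, pk_assoc]
        have hdg2 : d (e, g.2) = true := by
          rw [this, hdσ2, hdσ0, hv0]
          rfl
        rw [← hgeta, hdg] at hdg2
        exact Bool.false_ne_true hdg2
    · -- x is not next to the medial vertex of e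
      have hxP : x ≠ P := by
        intro h
        apply hg
        rw [h, hPdef]
        show (G.s1 (G.s1 (e, v0))).1 = e
        rw [G.s1_invol]
      have hxQ : x ≠ Q := by
        intro h
        apply hg
        rw [h, hQdef]
        show (G.s1 (G.s1 (e, v1))).1 = e
        rw [G.s1_invol]
      rw [Equiv.swap_apply_of_ne_of_ne hxP hxQ, hσ2e]
      simp only [if_neg hg]
  have hfI : (G.petrial (insert e A)).nFaces = Qc (permD (G.petrial (insert e A)) d h0I h1I) :=
    nFaces_eq_Qc _ _ _ _
  have hfA : (G.petrial A).nFaces = Qc (permD (G.petrial A) d h0A h1A) :=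
    nFaces_eq_Qc _ _ _ _
  rw [hfI, hfA, hperm]
  exact Qc_mul_swap_parity _ P Q hPQ

end Stmt10Step

/-- If `G` is orientable and checkerboard colourable and `s` is a Penrose state of its
medial graph (identified with the set `A` of medial vertices at which it crosses, so that
`cr(s) = |A|` and `c(s) = f(G^{τ(A)})`), then `cr(s) + c(s) ≡ f(G) (mod 2)`. -/
theorem stmt10 {E : Type} [Fintype E] [DecidableEq E] (G : RibbonGraph E)
    (hor : G.Orientable) (hcb : G.CheckerboardColourable) (A : Finset E) :
    A.card + (G.petrial A).nFaces ≡ G.nFaces [MOD 2] := by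
  classical
  obtain ⟨o, ho⟩ := hor
  obtain ⟨c, hc⟩ := hcb
  induction A using Finset.induction_on with
  | empty =>
    rw [Finset.card_empty, petrial_empty_nFaces, zero_add]
  | insert e A he ih =>
    rw [Finset.card_insert_of_notMem he]
    have hstep := parity_step G o c ho hc A e he
    have ih' : (A.card + (G.petrial A).nFaces) % 2 = G.nFaces % 2 := ih
    show (A.card + 1 + (G.petrial (insert e A)).nFaces) % 2 = G.nFaces % 2
    omega

end RibbonGraph

end Penrose
end

section
/- For any embedded graph G and positive integer n, P(G;n) = Σ_s (−1)^{cr(s)}, where the sum is over all admissible n-valuations s of the medial graph G_m and cr(s) is the number of vertices of crossing type in s. -/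
open Polynomial

namespace Penrose

namespace RibbonGraph

variable {E : Type}

/-! ### Auxiliary lemmas for the Penrose state-sum theorem -/

section Aux

private lemma kAdd_comm' : ∀ x y : Bool × Bool, kAdd x y = kAdd y x := by decide

private lemma kAdd_zero' : ∀ x : Bool × Bool, kAdd (false, false) x = x := by decide

private lemma kswap : ∀ p x y : Bool × Bool, kAdd (kAdd p x) y = kAdd p (kAdd y x) := by decide

private lemma kab_ne_zero : ∀ x y : Bool × Bool, x ≠ y → kAdd x y ≠ (false, false) := by decide

private lemma kab_ne_left :
    ∀ x y : Bool × Bool, y ≠ (false, false) → kAdd x y ≠ x := by decide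

private lemma klein_cases : ∀ x y p : Bool × Bool, x ≠ (false, false) → y ≠ (false, false) →
    x ≠ y → p = (false, false) ∨ p = x ∨ p = y ∨ p = kAdd x y := by decide

/-- If a function on the Klein four-group is invariant under the shift by a nonzero `x` and
agrees at `y ≠ 0, x` with its value at `0`, then it is constant. -/
private lemma total_of {n : ℕ} (α : Bool × Bool → Fin n) {x y : Bool × Bool}
    (hx : x ≠ (false, false)) (hy : y ≠ (false, false)) (hxy : x ≠ y)
    (hinv : ∀ p, α (kAdd p x) = α p) (h0 : α y = α (false, false)) (p : Bool × Bool) :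
    α p = α (false, false) := by
  rcases klein_cases x y p hx hy hxy with h | h | h | h <;> rw [h]
  · rw [← kAdd_zero' x, hinv]
  · exact h0
  · rw [kAdd_comm' x y, hinv, h0]

variable {E : Type}

namespace StateSum

variable {n : ℕ} (G : RibbonGraph E) (c : Flags E → Fin n)

/-- The white-split pairing holds at `e`. -/
def WP (e : E) : Prop := ∀ p : Bool × Bool, c (G.σ0 (e, p)) = c (e, p)

/-- The crossing pairing holds at `e`. -/
def CP (e : E) : Prop := ∀ p : Bool × Bool, c (G.σ0 (G.σ2 (e, p))) = c (e, p)

variable {G c}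

lemma cp_iff (e : E) :
    CP G c e ↔ ∀ p : Bool × Bool, c (e, kAdd p (kAdd (G.a e) (G.b e))) = c (e, p) := by
  constructor <;> intro h p
  · have := h p
    simpa [RibbonGraph.σ0, RibbonGraph.σ2, kswap] using this
  · show c (e, kAdd (kAdd p (G.b e)) (G.a e)) = c (e, p)
    rw [kswap]
    exact h p

lemma totalAt_of_wp_cp {e : E} (hw : WP G c e) (hc : CP G c e) : G.TotalAt c e := by
  have hc' := (cp_iff e).1 hc
  have htot : ∀ p, c (e, p) = c (e, (false, false)) := by
    refine total_of (fun p => c (e, p)) (G.a_ne e)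
      (kab_ne_zero _ _ (G.ab_ne e)) ((kab_ne_left (G.a e) (G.b e) (G.b_ne e)).symm)
      (fun p => hw p) ?_
    have := hc' (false, false)
    rwa [kAdd_zero'] at this
  intro p q
  rw [htot p, htot q]

lemma totalAt_of_wp_eqb {e : E} (hw : WP G c e)
    (h : c (e, (false, false)) = c (e, G.b e)) : G.TotalAt c e := by
  have htot : ∀ p, c (e, p) = c (e, (false, false)) :=
    total_of (fun p => c (e, p)) (G.a_ne e) (G.b_ne e) (G.ab_ne e) (fun p => hw p) h.symm
  intro p q
  rw [htot p, htot q]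

lemma totalAt_of_cp_eqa {e : E} (hc : CP G c e)
    (h : c (e, (false, false)) = c (e, G.a e)) : G.TotalAt c e := by
  have hc' := (cp_iff e).1 hc
  have htot : ∀ p, c (e, p) = c (e, (false, false)) :=
    total_of (fun p => c (e, p)) (kab_ne_zero _ _ (G.ab_ne e)) (G.a_ne e)
      (kab_ne_left (G.a e) (G.b e) (G.b_ne e)) (fun p => hc' p) h.symm
  intro p q
  rw [htot p, htot q]

lemma wp_of_totalAt {e : E} (ht : G.TotalAt c e) : WP G c e := fun p => ht _ p

lemma cp_of_totalAt {e : E} (ht : G.TotalAt c e) : CP G c e := fun p => ht _ p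

lemma whiteAt_iff (e : E) : G.WhiteAt c e ↔ WP G c e ∧ ¬ CP G c e := by
  constructor
  · rintro ⟨hw, hne⟩
    refine ⟨hw, fun hc => hne ?_⟩
    exact totalAt_of_wp_cp hw hc (false, false) _
  · rintro ⟨hw, hnc⟩
    refine ⟨hw, fun h => hnc ?_⟩
    have h' : c (e, (false, false)) = c (e, G.b e) := by
      simpa [RibbonGraph.σ2, kAdd_zero'] using h
    exact cp_of_totalAt (totalAt_of_wp_eqb hw h')

lemma crossAt_iff (e : E) : G.CrossAt c e ↔ CP G c e ∧ ¬ WP G c e := by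
  constructor
  · rintro ⟨hc, hne⟩
    refine ⟨hc, fun hw => hne ?_⟩
    exact totalAt_of_wp_cp hw hc (false, false) _
  · rintro ⟨hc, hnw⟩
    refine ⟨hc, fun h => hnw ?_⟩
    have h' : c (e, (false, false)) = c (e, G.a e) := by
      simpa [RibbonGraph.σ0, kAdd_zero'] using h
    exact wp_of_totalAt (totalAt_of_cp_eqa hc h')

end StateSum

/-- The number of colourings constant on the classes of a relation. -/
private lemma card_invariant_colorings {X : Type} [Finite X] (r : X → X → Prop) (n : ℕ) :
    Nat.card {c : X → Fin n // ∀ x y, r x y → c x = c y} = n ^ Nat.card (Quot r) := by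
  have eqv : {c : X → Fin n // ∀ x y, r x y → c x = c y} ≃ (Quot r → Fin n) :=
    { toFun := fun c => Quot.lift c.1 c.2
      invFun := fun g => ⟨fun x => g (Quot.mk r x), fun x y h => congrArg g (Quot.sound h)⟩
      left_inv := fun c => rfl
      right_inv := fun g => funext fun q => Quot.inductionOn q fun x => rfl }
  haveI : Finite (Quot r) := Finite.of_surjective (Quot.mk r) (fun q => Quot.exists_rep q)
  rw [Nat.card_congr eqv, Nat.card_fun, Nat.card_eq_fintype_card (α := Fin n),
    Fintype.card_fin]

end Aux

open scoped Classical in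
/-- For any embedded graph `G` and positive integer `n`,
`P(G;n) = ∑_s (−1)^{cr(s)}`, the sum over all admissible `n`-valuations `s` of the
medial graph `G_m`. -/
theorem stmt15 {E : Type} [Fintype E] [DecidableEq E] (G : RibbonGraph E)
    (n : ℕ) (hn : 0 < n) :
    G.penrose.eval (n : ℤ) =
      ∑ c ∈ (Finset.univ : Finset (Flags E → Fin n)).filter (fun c => G.Admissible c),
        (-1 : ℤ) ^ G.crCount c := by
  classical
  have lhs1 : G.penrose.eval (n : ℤ) = ∑ A ∈ (Finset.univ : Finset E).powerset,
      (-1 : ℤ) ^ A.card * (n : ℤ) ^ (G.petrial A).nFaces := by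
    simp [penrose, Polynomial.eval_finset_sum]
  have key : ∀ A : Finset E, ((n : ℤ)) ^ (G.petrial A).nFaces
      = ∑ c ∈ (Finset.univ : Finset (Flags E → Fin n)),
          (if ∀ x y, (G.petrial A).faceStep x y → c x = c y then (1 : ℤ) else 0) := by
    intro A
    rw [Finset.sum_boole]
    have h2 : (Finset.univ.filter fun c : Flags E → Fin n =>
        ∀ x y, (G.petrial A).faceStep x y → c x = c y).card
        = n ^ (G.petrial A).nFaces := by
      rw [← Fintype.card_subtype, ← Nat.card_eq_fintype_card]
      exact card_invariant_colorings ((G.petrial A).faceStep) n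
    rw [h2]
    push_cast
    ring
  rw [lhs1]
  have swap : ∑ A ∈ (Finset.univ : Finset E).powerset,
        (-1 : ℤ) ^ A.card * (n : ℤ) ^ (G.petrial A).nFaces
      = ∑ c ∈ (Finset.univ : Finset (Flags E → Fin n)),
          ∑ A ∈ (Finset.univ : Finset E).powerset,
            (if ∀ x y, (G.petrial A).faceStep x y → c x = c y
              then (-1 : ℤ) ^ A.card else 0) := by
    rw [Finset.sum_comm]
    refine Finset.sum_congr rfl ?_
    intro A _
    rw [key A, Finset.mul_sum]
    refine Finset.sum_congr rfl ?_
    intro c _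
    rw [mul_ite, mul_one, mul_zero]
  rw [swap, Finset.sum_filter]
  refine Finset.sum_congr rfl ?_
  intro c _
  by_cases hv : G.IsValuation c
  · -- `c` is a valuation of the medial graph
    have compat_iff : ∀ A : Finset E,
        (∀ x y, (G.petrial A).faceStep x y → c x = c y)
          ↔ ∀ e : E, (e ∈ A → StateSum.CP G c e) ∧ (e ∉ A → StateSum.WP G c e) := by
      intro A
      constructor
      · intro h e
        constructor
        · intro heA p
          have hstep := h (e, p) ((G.petrial A).σ0 (e, p)) (Or.inl rfl)
          have hp : (G.petrial A).σ0 (e, p) = G.σ0 (G.σ2 (e, p)) := by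
            simp [RibbonGraph.petrial, RibbonGraph.σ0, RibbonGraph.σ2, heA, kswap]
          rw [hp] at hstep
          exact hstep.symm
        · intro heA p
          have hstep := h (e, p) ((G.petrial A).σ0 (e, p)) (Or.inl rfl)
          have hp : (G.petrial A).σ0 (e, p) = G.σ0 (e, p) := by
            simp [RibbonGraph.petrial, RibbonGraph.σ0, heA]
          rw [hp] at hstep
          exact hstep.symm
      · intro h
        rintro ⟨e, p⟩ y (rfl | rfl)
        · by_cases heA : e ∈ A
          · have hp : (G.petrial A).σ0 (e, p) = G.σ0 (G.σ2 (e, p)) := by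
              simp [RibbonGraph.petrial, RibbonGraph.σ0, RibbonGraph.σ2, heA, kswap]
            rw [hp]
            exact ((h e).1 heA p).symm
          · have hp : (G.petrial A).σ0 (e, p) = G.σ0 (e, p) := by
              simp [RibbonGraph.petrial, RibbonGraph.σ0, heA]
            rw [hp]
            exact ((h e).2 heA p).symm
        · exact (hv (e, p)).symm
    have hprod : (∏ e : E,
          ((if StateSum.CP G c e then (-1 : ℤ) else 0)
            + (if StateSum.WP G c e then 1 else 0)))
        = ∑ A ∈ (Finset.univ : Finset E).powerset,
            (if ∀ x y, (G.petrial A).faceStep x y → c x = c y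
              then (-1 : ℤ) ^ A.card else 0) := by
      rw [Finset.prod_add]
      refine Finset.sum_congr rfl ?_
      intro A hA
      by_cases hc : ∀ e : E, (e ∈ A → StateSum.CP G c e) ∧ (e ∉ A → StateSum.WP G c e)
      · rw [if_pos ((compat_iff A).2 hc)]
        have h1 : ∏ e ∈ A, (if StateSum.CP G c e then (-1 : ℤ) else 0)
            = (-1 : ℤ) ^ A.card := by
          rw [Finset.prod_congr rfl (fun e he => if_pos ((hc e).1 he)),
            Finset.prod_const]
        have h2 : ∏ e ∈ Finset.univ \ A,
            (if StateSum.WP G c e then (1 : ℤ) else 0) = 1 := by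
          refine Finset.prod_eq_one ?_
          intro e he
          exact if_pos ((hc e).2 (Finset.mem_sdiff.1 he).2)
        rw [h1, h2, mul_one]
      · rw [if_neg (fun h => hc ((compat_iff A).1 h))]
        obtain ⟨e, he⟩ := not_forall.1 hc
        by_cases heA : e ∈ A
        · have hnc : ¬ StateSum.CP G c e := fun h =>
            he ⟨fun _ => h, fun h' => absurd heA h'⟩
          have hz : (∏ i ∈ A, if StateSum.CP G c i then (-1 : ℤ) else 0) = 0 :=
            Finset.prod_eq_zero heA (if_neg hnc)
          rw [hz, zero_mul]
        · have hnw : ¬ StateSum.WP G c e := fun h =>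
            he ⟨fun h' => absurd h' heA, fun _ => h⟩
          have hz : (∏ i ∈ Finset.univ \ A, if StateSum.WP G c i then (1 : ℤ) else 0) = 0 :=
            Finset.prod_eq_zero (Finset.mem_sdiff.2 ⟨Finset.mem_univ e, heA⟩) (if_neg hnw)
          rw [hz, mul_zero]
    rw [← hprod]
    have hfac : ∀ e : E,
        ((if StateSum.CP G c e then (-1 : ℤ) else 0)
          + (if StateSum.WP G c e then 1 else 0))
        = if G.WhiteAt c e then 1 else if G.CrossAt c e then -1 else 0 := by
      intro e
      by_cases hcp : StateSum.CP G c e <;> by_cases hwp : StateSum.WP G c e <;>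
        simp [hcp, hwp, StateSum.whiteAt_iff, StateSum.crossAt_iff]
    rw [Finset.prod_congr rfl (fun e _ => hfac e)]
    by_cases hadm : ∀ e : E, G.WhiteAt c e ∨ G.CrossAt c e
    · rw [if_pos ⟨hv, hadm⟩]
      have hcr : G.crCount c = (Finset.univ.filter fun e => G.CrossAt c e).card := by
        rw [crCount, Nat.card_eq_fintype_card, Fintype.card_subtype]
      have hstep : ∀ e : E, (if G.WhiteAt c e then (1 : ℤ)
          else if G.CrossAt c e then -1 else 0) = if G.CrossAt c e then -1 else 1 := by
        intro e
        by_cases hc2 : G.CrossAt c e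
        · have hnw : ¬ G.WhiteAt c e := by
            rw [StateSum.whiteAt_iff]
            rw [StateSum.crossAt_iff] at hc2
            exact fun h => h.2 hc2.1
          simp [hc2, hnw]
        · have hw : G.WhiteAt c e := (hadm e).resolve_right hc2
          simp [hw, hc2]
      rw [Finset.prod_congr rfl (fun e _ => hstep e), Finset.prod_ite,
        Finset.prod_const, Finset.prod_const_one, mul_one, hcr]
    · rw [if_neg (fun h => hadm h.2)]
      push_neg at hadm
      obtain ⟨e, hnw, hnc⟩ := hadm
      refine Finset.prod_eq_zero (Finset.mem_univ e) ?_
      rw [if_neg hnw, if_neg hnc]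
  · -- `c` is not a valuation: both sides vanish
    rw [if_neg (fun h => hv h.1)]
    refine Finset.sum_eq_zero ?_
    intro A _
    refine if_neg (fun h => hv ?_)
    intro f
    exact (h f (G.s1 f) (Or.inr rfl)).symm

end RibbonGraph

end Penrose
end
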